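/- arXiv:2109.11617 — 7 statements merged into one kernel-verified Lean document; each statement's English description precedes it below -/
import Mathlib

section
/- For every natural number p ≥ 1 there exist real polynomials g and f, with g not constant, and a real polynomial h of degree at most p, such that ∫_{-1}^{1} h(x) · d/dx[Π_p(g·f)](x) dx ≠ ∫_{-1}^{1} h(x) · g(x) · d/dx[Π_p f](x) dx, where Π_p denotes the L²((-1,1))-orthogonal projection onto the subspace of polynomial functions of degree at most p. Hence the conservative volume term, in which the metric-weighted flux g·f is projected onto the polynomial space before differentiation, differs from the non-conservative volume term, in which the metric g multiplies the differentiated projection of f — even with exact integration and exact metric terms. -/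
open MeasureTheory Polynomial

/-- `IsL2Proj p F P`: `P` is (a representative of) the `L²((-1,1))`-orthogonal projection of the
function `F` onto the subspace of polynomial functions of degree at most `p`, characterized by
`P` having degree at most `p` and `F - P` being `L²`-orthogonal to every polynomial of degree
at most `p`. -/
def IsL2Proj (p : ℕ) (F : ℝ → ℝ) (P : Polynomial ℝ) : Prop :=
  P.natDegree ≤ p ∧
    ∀ q : Polynomial ℝ, q.natDegree ≤ p →
      (∫ x in Set.Ioo (-1 : ℝ) 1, (F x - P.eval x) * q.eval x) = 0

/-- For every `p ≥ 1` there exist polynomials `g` (not constant) and `f`, and a test polynomial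
`h` of degree at most `p`, such that the conservative volume term
`∫ h · (Π_p (g·f))'` differs from the non-conservative volume term `∫ h · g · (Π_p f)'`. -/
theorem conservative_ne_nonconservative_volume_terms (p : ℕ) (hp : 1 ≤ p) :
    ∃ g f P Q h : Polynomial ℝ,
      (¬ ∃ c : ℝ, g = Polynomial.C c) ∧
      h.natDegree ≤ p ∧
      IsL2Proj p (fun x => (g * f).eval x) P ∧
      IsL2Proj p (fun x => f.eval x) Q ∧
      (∫ x in Set.Ioo (-1 : ℝ) 1, h.eval x * (Polynomial.derivative P).eval x) ≠
        (∫ x in Set.Ioo (-1 : ℝ) 1, h.eval x * g.eval x * (Polynomial.derivative Q).eval x) := by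
  refine ⟨X, 1, X, 1, 1, ?_, ?_, ?_, ?_, ?_⟩
  · rintro ⟨c, hc⟩
    have h0 : (X : Polynomial ℝ).natDegree = 1 := natDegree_X
    rw [hc] at h0
    simp at h0
  · simp
  · constructor
    · simpa using hp
    · intro q hq; simp
  · constructor
    · simp
    · intro q hq; simp
  · simp only [map_one, derivative_X, derivative_one, eval_one, eval_zero, mul_zero, mul_one,
      one_mul]
    rw [integral_const, integral_zero]
    simp [Real.volume_Ioo]
end

section
/- Let a, b, c, d be real numbers with a(c+d) − b² ≠ 0. Set M = [[a, b], [b, c]] and K = [[0, 0], [0, d]] as 2×2 real matrices. Then M + K is invertible and the filter matrix F := (M+K)⁻¹ · M equals [[1, b·d/(a(c+d) − b²)], [0, (a·c − b²)/(a(c+d) − b²)]]. In particular, if b ≠ 0 and d ≠ 0 then F is not a diagonal matrix; that is, the ESFR filter acts on all modes of the discretization and not only on the highest-order mode. -/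
open Matrix

/-- For `M = [[a,b],[b,c]]` (the dense Jacobian-weighted reference mass matrix) and
`K = [[0,0],[0,d]]` (the ESFR correction acting only on the highest mode), with
`a(c+d) − b² ≠ 0`, the matrix `M + K` is invertible and the ESFR filter
`F = (M+K)⁻¹ M` equals `[[1, bd/(a(c+d)−b²)], [0, (ac−b²)/(a(c+d)−b²)]]`;
in particular if `b ≠ 0` and `d ≠ 0` then `F` is not diagonal, i.e. the filter acts on
all modes and not only the highest-order one. -/
theorem esfr_filter_acts_on_all_modes (a b c d : ℝ) (h : a * (c + d) - b ^ 2 ≠ 0) :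
    IsUnit (!![a, b; b, c] + !![0, 0; 0, d]) ∧
    (!![a, b; b, c] + !![0, 0; 0, d])⁻¹ * !![a, b; b, c] =
      !![1, b * d / (a * (c + d) - b ^ 2);
         0, (a * c - b ^ 2) / (a * (c + d) - b ^ 2)] ∧
    (b ≠ 0 → d ≠ 0 →
      ¬ ((!![a, b; b, c] + !![0, 0; 0, d])⁻¹ * !![a, b; b, c]).IsDiag) := by
  have hA : (!![a, b; b, c] + !![0, 0; 0, d]) = !![a, b; b, (c + d)] := by
    ext i j; fin_cases i <;> fin_cases j <;> simp [Matrix.add_apply] <;> ring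
  have hdet : (!![a, b; b, (c + d)]).det = a * (c + d) - b ^ 2 := by
    simp [Matrix.det_fin_two_of]; ring
  have hunit : IsUnit (!![a, b; b, (c + d)]).det := by
    rw [hdet]; exact isUnit_iff_ne_zero.mpr h
  have hinv : (!![a, b; b, (c + d)])⁻¹ =
      (a * (c + d) - b ^ 2)⁻¹ • !![(c + d), -b; -b, a] := by
    rw [Matrix.inv_def, hdet, Matrix.adjugate_fin_two_of, Ring.inverse_eq_inv]
  have hF : (!![a, b; b, c] + !![0, 0; 0, d])⁻¹ * !![a, b; b, c] =
      !![1, b * d / (a * (c + d) - b ^ 2);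
         0, (a * c - b ^ 2) / (a * (c + d) - b ^ 2)] := by
    rw [hA, hinv]
    ext i j
    fin_cases i <;> fin_cases j <;>
      simp [Matrix.mul_apply, Fin.sum_univ_two, div_eq_iff h] <;>
      field_simp <;> ring
  refine ⟨?_, hF, ?_⟩
  · rw [hA]; exact (Matrix.isUnit_iff_isUnit_det _).mpr hunit
  · intro hb hd hdiag
    have := hdiag (i := 0) (j := 1) (by decide)
    rw [hF] at this
    simp at this
    rcases this with (h1 | h1) | h2
    · exact hb h1
    · exact hd h1
    · exact h h2
end

section
/- Let n_q and n_p be natural numbers, let χ be a real n_q × n_p matrix, let W and J be diagonal real n_q × n_q matrices with J invertible, and let K be a real n_p × n_p matrix. Set M := χᵀ W J χ, assume M and M + K are invertible, and define Π_m := M⁻¹ χᵀ W J. Then for all vectors v ∈ ℝ^{n_p}, V ∈ ℝ^{n_q}, and S ∈ ℝ^{n_p}, the equation (M + K)·v + (1/2)·M·Π_m·(J⁻¹·V) + (1/2)·K·Π_m·(J⁻¹·V) + S = 0 holds if and only if v + (1/2)·M⁻¹·χᵀ·W·V + (M + K)⁻¹·S = 0. That is, the classical ESFR split form is equivalent to the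 DG split form with the ESFR filter (M+K)⁻¹ applied solely to the facet term. -/
open Matrix

/-- The classical ESFR split form (correction applied to volume and facet terms through the
metric-dependent projection `Π_m = M⁻¹ χᵀ W J`) is equivalent to the DG split form with the
ESFR filter `(M+K)⁻¹` applied solely to the facet term. -/
theorem esfr_classical_split_iff_filtered_facet
    (n_q n_p : ℕ)
    (χ : Matrix (Fin n_q) (Fin n_p) ℝ)
    (W J : Matrix (Fin n_q) (Fin n_q) ℝ)
    (hW : W.IsDiag) (hJ : J.IsDiag) (hJinv : IsUnit J)
    (K : Matrix (Fin n_p) (Fin n_p) ℝ)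
    (hM : IsUnit (χᵀ * W * J * χ))
    (hMK : IsUnit (χᵀ * W * J * χ + K)) :
    ∀ (v : Fin n_p → ℝ) (V : Fin n_q → ℝ) (S : Fin n_p → ℝ),
      ((χᵀ * W * J * χ + K).mulVec v
        + (1 / 2 : ℝ) • ((χᵀ * W * J * χ) * ((χᵀ * W * J * χ)⁻¹ * χᵀ * W * J)).mulVec
            (J⁻¹.mulVec V)
        + (1 / 2 : ℝ) • (K * ((χᵀ * W * J * χ)⁻¹ * χᵀ * W * J)).mulVec (J⁻¹.mulVec V)
        + S = 0)
      ↔ (v + (1 / 2 : ℝ) • ((χᵀ * W * J * χ)⁻¹ * χᵀ * W).mulVec V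
          + (χᵀ * W * J * χ + K)⁻¹.mulVec S = 0) := by
  intro v V S
  set M := χᵀ * W * J * χ with hMdef
  have hdM : IsUnit M.det := (Matrix.isUnit_iff_isUnit_det _).mp hM
  have hdMK : IsUnit (M + K).det := (Matrix.isUnit_iff_isUnit_det _).mp hMK
  have hdJ : IsUnit J.det := (Matrix.isUnit_iff_isUnit_det _).mp hJinv
  have hJJ : J * J⁻¹ = 1 := Matrix.mul_nonsing_inv _ hdJ
  have hMM : M * M⁻¹ = 1 := Matrix.mul_nonsing_inv _ hdM
  have h1 : M * (M⁻¹ * χᵀ * W * J) * J⁻¹ = χᵀ * W := by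
    rw [show M * (M⁻¹ * χᵀ * W * J) * J⁻¹ = (M * M⁻¹) * (χᵀ * (W * (J * J⁻¹))) by
      simp [Matrix.mul_assoc], hJJ, hMM, Matrix.mul_one, Matrix.one_mul]
  have h2 : K * (M⁻¹ * χᵀ * W * J) * J⁻¹ = K * (M⁻¹ * χᵀ * W) := by
    rw [show K * (M⁻¹ * χᵀ * W * J) * J⁻¹ = K * (M⁻¹ * (χᵀ * (W * (J * J⁻¹)))) by
      simp [Matrix.mul_assoc], hJJ, Matrix.mul_one]
    simp [Matrix.mul_assoc]
  have key : (M + K).mulVec v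
        + (1 / 2 : ℝ) • (M * (M⁻¹ * χᵀ * W * J)).mulVec (J⁻¹.mulVec V)
        + (1 / 2 : ℝ) • (K * (M⁻¹ * χᵀ * W * J)).mulVec (J⁻¹.mulVec V)
        + S
      = (M + K).mulVec (v + (1 / 2 : ℝ) • (M⁻¹ * χᵀ * W).mulVec V
          + (M + K)⁻¹.mulVec S) := by
    have h3 : (M + K) * (M⁻¹ * χᵀ * W) = χᵀ * W + K * (M⁻¹ * χᵀ * W) := by
      rw [Matrix.add_mul, ← Matrix.mul_assoc M, ← Matrix.mul_assoc M,
        hMM, Matrix.one_mul]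
    rw [Matrix.mulVec_mulVec, Matrix.mulVec_mulVec, h1, h2,
      Matrix.mulVec_add, Matrix.mulVec_add, Matrix.mulVec_smul,
      Matrix.mulVec_mulVec, h3, Matrix.mulVec_mulVec,
      Matrix.mul_nonsing_inv _ hdMK, Matrix.one_mulVec,
      Matrix.add_mulVec (M) (K)]
    rw [Matrix.add_mulVec (χᵀ * W) (K * (M⁻¹ * χᵀ * W)) V, smul_add]
    abel
  rw [key]
  constructor
  · intro h
    have h' := congrArg ((M + K)⁻¹.mulVec) h
    simpa [Matrix.mulVec_mulVec, Matrix.nonsing_inv_mul _ hdMK] using h'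
  · intro h
    rw [h, Matrix.mulVec_zero]
end

section
/- Let Θ : ℝ³ → ℝ³ be twice continuously differentiable, and write a_j(ξ) := ∂Θ/∂ξ_j for the j-th column of its Jacobian. Then for every cyclic permutation (i,j,k) of (1,2,3), every cyclic permutation (n,m,l) of (1,2,3), and every ξ ∈ ℝ³: ( a_j(ξ) × a_k(ξ) )_n = −[ curl( Θ_l · ∇Θ_m ) ]_i (ξ) = −(1/2)·[ curl( Θ_l · ∇Θ_m − Θ_m · ∇Θ_l ) ]_i (ξ). That is, the cross product form, the conservative curl form, and the invariant curl form of the metric terms J^Ω (a^i)_n all coincide for the exact mapping. -/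
/-- Partial derivative in the `i`-th coordinate direction. -/
noncomputable def pderiv3 (i : Fin 3) (f : (Fin 3 → ℝ) → ℝ) (x : Fin 3 → ℝ) : ℝ :=
  fderiv ℝ f x (Pi.single i 1)

/-- Gradient of a scalar field on `ℝ³` (with respect to the reference coordinates). -/
noncomputable def grad3 (f : (Fin 3 → ℝ) → ℝ) (x : Fin 3 → ℝ) : Fin 3 → ℝ :=
  fun i => pderiv3 i f x

/-- Curl of a vector field on `ℝ³`:
`curl F = (∂₂F₃ − ∂₃F₂, ∂₃F₁ − ∂₁F₃, ∂₁F₂ − ∂₂F₁)`. -/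
noncomputable def curl3 (F : (Fin 3 → ℝ) → (Fin 3 → ℝ)) (x : Fin 3 → ℝ) : Fin 3 → ℝ :=
  ![pderiv3 1 (fun y => F y 2) x - pderiv3 2 (fun y => F y 1) x,
    pderiv3 2 (fun y => F y 0) x - pderiv3 0 (fun y => F y 2) x,
    pderiv3 0 (fun y => F y 1) x - pderiv3 1 (fun y => F y 0) x]

/-- The covariant basis vector `a_j(ξ) = ∂Θ/∂ξ_j`. -/
noncomputable def covariantBasis (Θ : (Fin 3 → ℝ) → (Fin 3 → ℝ)) (j : Fin 3)
    (ξ : Fin 3 → ℝ) : Fin 3 → ℝ :=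
  fderiv ℝ Θ ξ (Pi.single j 1)

/-- The set of cyclic permutations of `(1,2,3)` (zero-indexed as `(0,1,2)`). -/
def cyclic3 : Set (Fin 3 × Fin 3 × Fin 3) := {(0, 1, 2), (1, 2, 0), (2, 0, 1)}

/-!
Write `f = Θ_l`, `g = Θ_m`. By the product rule and the symmetry of second derivatives,
`curl(f ∇g)_i = ∂_j(f ∂_k g) − ∂_k(f ∂_j g) = ∂_j f ∂_k g − ∂_k f ∂_j g`, the mixed terms
`f ∂_j∂_k g` cancelling. Since `(a_j)_p = ∂_j Θ_p`, this is `−(a_j × a_k)_n`. The right-hand side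
is antisymmetric in `(f, g)`, so `curl(g ∇f) = −curl(f ∇g)` and the invariant form equals the
conservative one.
-/

section CurlCalculus

variable {f g : (Fin 3 → ℝ) → ℝ} {x : Fin 3 → ℝ} {i j k : Fin 3}

lemma pderiv3_mul (hf : DifferentiableAt ℝ f x) (hg : DifferentiableAt ℝ g x) (a : Fin 3) :
    pderiv3 a (fun y => f y * g y) x = pderiv3 a f x * g x + f x * pderiv3 a g x := by
  simp only [pderiv3, fderiv_fun_mul hf hg, add_apply, smul_apply, smul_eq_mul]
  ring

lemma pderiv3_sub (hf : DifferentiableAt ℝ f x) (hg : DifferentiableAt ℝ g x) (a : Fin 3) :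
    pderiv3 a (fun y => f y - g y) x = pderiv3 a f x - pderiv3 a g x := by
  simp only [pderiv3, fderiv_fun_sub hf hg, sub_apply]

lemma differentiableAt_pderiv3 (hf : ContDiffAt ℝ 2 f x) (a : Fin 3) :
    DifferentiableAt ℝ (pderiv3 a f) x :=
  ((hf.fderiv_right (m := 1) le_rfl).differentiableAt one_ne_zero).clm_apply
    (differentiableAt_const _)

lemma differentiableAt_grad3 (hf : ContDiffAt ℝ 2 f x) : DifferentiableAt ℝ (grad3 f) x :=
  differentiableAt_pi.2 (differentiableAt_pderiv3 hf)

lemma pderiv3_pderiv3_comm (hf : ContDiffAt ℝ 2 f x) (a b : Fin 3) :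
    pderiv3 a (pderiv3 b f) x = pderiv3 b (pderiv3 a f) x := by
  have hf' := (hf.fderiv_right (m := 1) le_rfl).differentiableAt one_ne_zero
  have second : ∀ a b : Fin 3,
      pderiv3 a (pderiv3 b f) x = fderiv ℝ (fderiv ℝ f) x (Pi.single a 1) (Pi.single b 1) := by
    intro a b
    change fderiv ℝ (fun y => fderiv ℝ f y (Pi.single b 1)) x (Pi.single a 1) = _
    rw [fderiv_clm_apply hf' (differentiableAt_const _)]
    simp
  rw [second, second]
  exact hf.isSymmSndFDerivAt (by simp [minSmoothness_of_isRCLikeNormedField]) _ _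

lemma crossProduct_apply_of_mem_cyclic3 (u v : Fin 3 → ℝ) {n m l : Fin 3}
    (h : (n, m, l) ∈ cyclic3) : crossProduct u v n = u m * v l - u l * v m := by
  simp only [cyclic3, Set.mem_insert_iff, Set.mem_singleton_iff, Prod.mk.injEq] at h
  rcases h with ⟨rfl, rfl, rfl⟩ | ⟨rfl, rfl, rfl⟩ | ⟨rfl, rfl, rfl⟩ <;> simp [cross_apply]

lemma curl3_apply_of_mem_cyclic3 (F : (Fin 3 → ℝ) → (Fin 3 → ℝ)) (x : Fin 3 → ℝ)
    (h : (i, j, k) ∈ cyclic3) :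
    curl3 F x i = pderiv3 j (fun y => F y k) x - pderiv3 k (fun y => F y j) x := by
  simp only [cyclic3, Set.mem_insert_iff, Set.mem_singleton_iff, Prod.mk.injEq] at h
  rcases h with ⟨rfl, rfl, rfl⟩ | ⟨rfl, rfl, rfl⟩ | ⟨rfl, rfl, rfl⟩ <;> simp [curl3]

lemma curl3_sub_apply {F G : (Fin 3 → ℝ) → (Fin 3 → ℝ)}
    (hF : DifferentiableAt ℝ F x) (hG : DifferentiableAt ℝ G x) (i : Fin 3) :
    curl3 (fun y => F y - G y) x i = curl3 F x i - curl3 G x i := by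
  have hF' := differentiableAt_pi.1 hF
  have hG' := differentiableAt_pi.1 hG
  fin_cases i <;> simp [curl3, pderiv3_sub (hF' _) (hG' _)] <;> ring

lemma covariantBasis_apply {Θ : (Fin 3 → ℝ) → (Fin 3 → ℝ)} {ξ : Fin 3 → ℝ}
    (hΘ : DifferentiableAt ℝ Θ ξ) (j p : Fin 3) :
    covariantBasis Θ j ξ p = pderiv3 j (fun x => Θ x p) ξ := by
  rw [covariantBasis, pderiv3, fderiv_apply hΘ]
  rfl

lemma curl3_smul_grad3_apply (hf : DifferentiableAt ℝ f x) (hg : ContDiffAt ℝ 2 g x)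
    (h : (i, j, k) ∈ cyclic3) :
    curl3 (fun y => f y • grad3 g y) x i =
      pderiv3 j f x * pderiv3 k g x - pderiv3 k f x * pderiv3 j g x := by
  rw [curl3_apply_of_mem_cyclic3 _ _ h]
  simp only [Pi.smul_apply, smul_eq_mul, grad3]
  rw [pderiv3_mul hf (differentiableAt_pderiv3 hg k),
    pderiv3_mul hf (differentiableAt_pderiv3 hg j), pderiv3_pderiv3_comm hg j k]
  ring

lemma curl3_smul_grad3_sub_smul_grad3_apply (hf : ContDiffAt ℝ 2 f x) (hg : ContDiffAt ℝ 2 g x)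
    (h : (i, j, k) ∈ cyclic3) :
    curl3 (fun y => f y • grad3 g y - g y • grad3 f y) x i =
      2 * curl3 (fun y => f y • grad3 g y) x i := by
  have hf₁ := hf.differentiableAt two_ne_zero
  have hg₁ := hg.differentiableAt two_ne_zero
  have hfg : DifferentiableAt ℝ (fun y => f y • grad3 g y) x :=
    hf₁.smul (differentiableAt_grad3 hg)
  have hgf : DifferentiableAt ℝ (fun y => g y • grad3 f y) x :=
    hg₁.smul (differentiableAt_grad3 hf)
  rw [curl3_sub_apply hfg hgf, curl3_smul_grad3_apply hf₁ hg h, curl3_smul_grad3_apply hg₁ hf h]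
  ring

end CurlCalculus

/-- For the exact (C²) mapping `Θ`, the cross product form, the conservative curl form, and
the invariant curl form of the metric terms `J^Ω (a^i)_n` all coincide:
`(a_j × a_k)_n = −[curl(Θ_l ∇Θ_m)]_i = −(1/2)[curl(Θ_l ∇Θ_m − Θ_m ∇Θ_l)]_i`
for all cyclic permutations `(i,j,k)` and `(n,m,l)` of `(1,2,3)`. -/
theorem metric_term_forms_coincide
    (Θ : (Fin 3 → ℝ) → (Fin 3 → ℝ)) (hΘ : ContDiff ℝ 2 Θ)
    (i j k : Fin 3) (hijk : (i, j, k) ∈ cyclic3)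
    (n m l : Fin 3) (hnml : (n, m, l) ∈ cyclic3)
    (ξ : Fin 3 → ℝ) :
    crossProduct (covariantBasis Θ j ξ) (covariantBasis Θ k ξ) n =
        -(curl3 (fun η => Θ η l • grad3 (fun ζ => Θ ζ m) η) ξ i) ∧
    crossProduct (covariantBasis Θ j ξ) (covariantBasis Θ k ξ) n =
        -(1 / 2 : ℝ) *
          (curl3 (fun η => Θ η l • grad3 (fun ζ => Θ ζ m) η
              - Θ η m • grad3 (fun ζ => Θ ζ l) η) ξ i) := by
  have hΘξ : DifferentiableAt ℝ Θ ξ := hΘ.contDiffAt.differentiableAt two_ne_zero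
  have hΘ_comp : ∀ p, ContDiffAt ℝ 2 (fun η => Θ η p) ξ := contDiffAt_pi.1 hΘ.contDiffAt
  have conservative : crossProduct (covariantBasis Θ j ξ) (covariantBasis Θ k ξ) n =
      -(curl3 (fun η => Θ η l • grad3 (fun ζ => Θ ζ m) η) ξ i) := by
    simp only [crossProduct_apply_of_mem_cyclic3 _ _ hnml, covariantBasis_apply hΘξ]
    rw [curl3_smul_grad3_apply ((hΘ_comp l).differentiableAt two_ne_zero) (hΘ_comp m) hijk]
    ring
  refine ⟨conservative, ?_⟩
  rw [conservative, curl3_smul_grad3_sub_smul_grad3_apply (hΘ_comp l) (hΘ_comp m) hijk]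
  ring
end

section
/- Let d, n_p, n_q be natural numbers. Let χ be a real n_q × n_p matrix and W a diagonal real n_q × n_q matrix such that M₀ := χᵀWχ is invertible, and set Π := M₀⁻¹χᵀW. For each r ∈ {1,…,d} let Ĝ_r be a real n_p × n_p matrix and set D_r := χ·Ĝ_r. Let Z be a finite set and for each z ∈ Z let φ_z ∈ ℝ^{n_p} (a row vector), w_z ∈ ℝ, n_z ∈ ℝ^d, and Cf_z a real d × d matrix. Assume the summation-by-parts property: for each r, χᵀ W D_r + D_rᵀ W χ = Σ_{z∈Z} w_z (n_z)_r φ_zᵀ φ_z. Let a ∈ ℝ^d, let N be a real n_p × n_p matrix, and for each e, r ∈ {1,…,d} let Cv_{e,r} be a diagonal real n_q × n_q matrix. Given û ∈ ℝ^{n_p}, set u_z := φ_z·û, ĝ_r := Π·( Σ_e a_e · Cv_{e,r} · (χ·û) ) ∈ ℝ^{n_p}, and t ∈ ℝ^{n_q} with t_q := Σ_{r,e} (Cv_{e,r})_{q,q} · a_e · (D_r·û)_q. Suppose v ∈ ℝ^{n_p} and the numerical-flux values f*_z ∈ ℝ^d satisfy the split-form scheme N·v + (1/2)·Σ_r χᵀ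 W D_r ĝ_r + (1/2)·χᵀ W t + Σ_z w_z φ_zᵀ s_z = 0, where s_z := Σ_r (n_z)_r · [ Σ_e (Cf_z)_{e,r} · ( f*_{z,e} − (1/2)·a_e·u_z ) − (1/2)·(φ_z·ĝ_r) ]. Then the energy rate is purely a surface term: ûᵀ·N·v = − Σ_z u_z · w_z · Σ_r (n_z)_r · Σ_e (Cf_z)_{e,r} · ( f*_{z,e} − (1/2)·a_e·u_z ). -/
open Matrix

lemma dot_mv {m n : ℕ} (B : Matrix (Fin m) (Fin n) ℝ) (y : Fin n → ℝ) (z : Fin m → ℝ) :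
    B.mulVec y ⬝ᵥ z = y ⬝ᵥ Bᵀ.mulVec z := by
  rw [dotProduct_comm, dotProduct_mulVec, dotProduct_comm, ← mulVec_transpose]

lemma dot_sum {n : ℕ} {ι : Type*} (s : Finset ι) (x : Fin n → ℝ) (f : ι → Fin n → ℝ) :
    x ⬝ᵥ (∑ i ∈ s, f i) = ∑ i ∈ s, x ⬝ᵥ f i := by
  simp only [dotProduct, Finset.sum_apply, Finset.mul_sum]
  exact Finset.sum_comm

lemma sum_mv {m n : ℕ} {ι : Type*} (s : Finset ι) (M : ι → Matrix (Fin m) (Fin n) ℝ)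
    (x : Fin n → ℝ) : (∑ i ∈ s, M i).mulVec x = ∑ i ∈ s, (M i).mulVec x := by
  ext j
  simp only [mulVec, dotProduct, Finset.sum_apply, Matrix.sum_apply, Finset.sum_mul]
  exact Finset.sum_comm

lemma dot_vecMulVec {n : ℕ} (p x g : Fin n → ℝ) :
    x ⬝ᵥ (vecMulVec p p).mulVec g = (p ⬝ᵥ x) * (p ⬝ᵥ g) := by
  simp only [vecMulVec, mulVec, dotProduct, of_apply, Finset.mul_sum, Finset.sum_mul]
  rw [Finset.sum_comm]
  exact Finset.sum_congr rfl fun i _ => Finset.sum_congr rfl fun j _ => by ring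

lemma diag_mulVec {n : ℕ} {A : Matrix (Fin n) (Fin n) ℝ} (h : A.IsDiag)
    (x : Fin n → ℝ) (q : Fin n) : A.mulVec x q = A q q * x q := by
  unfold Matrix.mulVec dotProduct
  rw [Finset.sum_eq_single q]
  · intro b _ hb; simp [h (Ne.symm hb)]
  · simp

/-- Energy stability of the proposed provably stable flux reconstruction split form for linear
advection on a curvilinear element: if the modal time derivative `v` satisfies the split-form
scheme (broken Sobolev-norm matrix `N = M_m + K_m`, split volume terms, facet terms with
numerical flux `fstar`), then the energy rate `ûᵀ N v` is purely a surface term. -/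
theorem fr_split_form_energy_stability
    (d n_p n_q : ℕ)
    (χ : Matrix (Fin n_q) (Fin n_p) ℝ)
    (W : Matrix (Fin n_q) (Fin n_q) ℝ) (hWdiag : W.IsDiag)
    (hM₀ : IsUnit (χᵀ * W * χ))
    (Ghat : Fin d → Matrix (Fin n_p) (Fin n_p) ℝ)
    (Z : Type) [Fintype Z]
    (φ : Z → Fin n_p → ℝ) (w : Z → ℝ) (nrm : Z → Fin d → ℝ)
    (Cf : Z → Matrix (Fin d) (Fin d) ℝ)
    -- summation-by-parts property
    (hSBP : ∀ r : Fin d,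
      χᵀ * W * (χ * Ghat r) + (χ * Ghat r)ᵀ * W * χ =
        ∑ z : Z, (w z * nrm z r) • vecMulVec (φ z) (φ z))
    (a : Fin d → ℝ)
    (N : Matrix (Fin n_p) (Fin n_p) ℝ)
    (Cv : Fin d → Fin d → Matrix (Fin n_q) (Fin n_q) ℝ)
    (hCv : ∀ e r, (Cv e r).IsDiag)
    (uhat : Fin n_p → ℝ)
    -- projected metric-weighted flux (modal coefficients of the reference flux)
    (ghat : Fin d → Fin n_p → ℝ)
    (hghat : ∀ r, ghat r =
      ((χᵀ * W * χ)⁻¹ * χᵀ * W).mulVec (∑ e : Fin d, a e • (Cv e r).mulVec (χ.mulVec uhat)))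
    -- non-conservative volume term at the volume cubature nodes
    (t : Fin n_q → ℝ)
    (ht : ∀ q, t q = ∑ r : Fin d, ∑ e : Fin d,
      Cv e r q q * a e * (χ * Ghat r).mulVec uhat q)
    (v : Fin n_p → ℝ)
    (fstar : Z → Fin d → ℝ)
    -- facet term
    (s : Z → ℝ)
    (hs : ∀ z, s z = ∑ r : Fin d, nrm z r *
      ((∑ e : Fin d, Cf z e r * (fstar z e - (1 / 2 : ℝ) * a e * (φ z ⬝ᵥ uhat)))
        - (1 / 2 : ℝ) * (φ z ⬝ᵥ ghat r)))
    -- the split-form scheme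
    (hscheme :
      N.mulVec v
        + (1 / 2 : ℝ) • (∑ r : Fin d, (χᵀ * W).mulVec ((χ * Ghat r).mulVec (ghat r)))
        + (1 / 2 : ℝ) • (χᵀ * W).mulVec t
        + ∑ z : Z, (w z * s z) • φ z = 0) :
    uhat ⬝ᵥ N.mulVec v =
      - ∑ z : Z, (φ z ⬝ᵥ uhat) * w z * ∑ r : Fin d, nrm z r *
          ∑ e : Fin d, Cf z e r * (fstar z e - (1 / 2 : ℝ) * a e * (φ z ⬝ᵥ uhat)) := by
  classical
  have hdet : IsUnit (χᵀ * W * χ).det := (Matrix.isUnit_iff_isUnit_det _).mp hM₀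
  set u : Fin n_q → ℝ := χ.mulVec uhat with hu
  -- projection identity
  have hproj : ∀ (y : Fin n_p → ℝ) (g : Fin n_q → ℝ),
      χ.mulVec y ⬝ᵥ W.mulVec (χ.mulVec (((χᵀ * W * χ)⁻¹ * χᵀ * W).mulVec g))
        = χ.mulVec y ⬝ᵥ W.mulVec g := by
    intro y g
    rw [dot_mv, dot_mv, mulVec_mulVec, mulVec_mulVec, mulVec_mulVec, mulVec_mulVec]
    have hmat : χᵀ * W * χ * ((χᵀ * W * χ)⁻¹ * χᵀ * W) = χᵀ * W := by
      rw [← Matrix.mul_assoc, ← Matrix.mul_assoc, Matrix.mul_nonsing_inv _ hdet,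
        Matrix.one_mul]
    rw [hmat]
  -- dot the scheme with uhat
  have h0 := congrArg (fun x => uhat ⬝ᵥ x) hscheme
  simp only [dotProduct_add, dotProduct_smul, smul_eq_mul, dotProduct_zero,
    dot_sum, dotProduct_smul] at h0
  -- SBP-based surface splitting of the volume flux term
  have hB : ∀ r : Fin d,
      uhat ⬝ᵥ (χᵀ * W).mulVec ((χ * Ghat r).mulVec (ghat r))
        = (∑ z : Z, (w z * nrm z r) * ((φ z ⬝ᵥ uhat) * (φ z ⬝ᵥ ghat r)))
          - (χ * Ghat r).mulVec uhat ⬝ᵥ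
              W.mulVec (∑ e : Fin d, a e • (Cv e r).mulVec u) := by
    intro r
    have hsub : χᵀ * W * (χ * Ghat r)
        = (∑ z : Z, (w z * nrm z r) • vecMulVec (φ z) (φ z)) - (χ * Ghat r)ᵀ * W * χ :=
      eq_sub_of_add_eq (hSBP r)
    rw [mulVec_mulVec (ghat r) (χᵀ * W) (χ * Ghat r), hsub, sub_mulVec, dotProduct_sub]
    congr 1
    · rw [sum_mv]
      rw [dot_sum]
      refine Finset.sum_congr rfl fun z _ => ?_
      rw [smul_mulVec, dotProduct_smul, smul_eq_mul, dot_vecMulVec]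
    · -- the discrete projection collapses: χ ĝ acts like the nodal flux under W-weighting
      rw [← mulVec_mulVec (ghat r) ((χ * Ghat r)ᵀ * W) χ,
        ← mulVec_mulVec (χ.mulVec (ghat r)) (χ * Ghat r)ᵀ W, ← dot_mv, hghat r,
        ← mulVec_mulVec uhat χ (Ghat r)]
      exact hproj _ _
  -- the non-conservative term matches the projection remainder
  have hC : (∑ r : Fin d, (χ * Ghat r).mulVec uhat ⬝ᵥ
        W.mulVec (∑ e : Fin d, a e • (Cv e r).mulVec u))
      = uhat ⬝ᵥ (χᵀ * W).mulVec t := by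
    rw [← mulVec_mulVec t χᵀ W, ← dot_mv, ← hu]
    simp only [dotProduct]
    rw [Finset.sum_comm]
    refine Finset.sum_congr rfl fun q _ => ?_
    rw [diag_mulVec hWdiag, ht q, Finset.mul_sum, Finset.mul_sum]
    refine Finset.sum_congr rfl fun r _ => ?_
    rw [diag_mulVec hWdiag]
    have hx : (∑ e : Fin d, a e • (Cv e r).mulVec u) q
        = ∑ e : Fin d, a e * ((Cv e r) q q * u q) := by
      rw [Finset.sum_apply]
      exact Finset.sum_congr rfl fun e _ => by
        rw [Pi.smul_apply, smul_eq_mul, diag_mulVec (hCv e r)]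
    rw [hx]
    simp only [Finset.mul_sum]
    exact Finset.sum_congr rfl fun e _ => by ring
  -- assemble
  have h1 : uhat ⬝ᵥ N.mulVec v
      = -(1 / 2 : ℝ) * (∑ r : Fin d, ∑ z : Z,
          (w z * nrm z r) * ((φ z ⬝ᵥ uhat) * (φ z ⬝ᵥ ghat r)))
        - ∑ z : Z, (w z * s z) * (uhat ⬝ᵥ φ z) := by
    have h2 : ∑ r : Fin d, uhat ⬝ᵥ (χᵀ * W).mulVec ((χ * Ghat r).mulVec (ghat r))
        = (∑ r : Fin d, ∑ z : Z, (w z * nrm z r) * ((φ z ⬝ᵥ uhat) * (φ z ⬝ᵥ ghat r)))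
          - uhat ⬝ᵥ (χᵀ * W).mulVec t := by
      rw [← hC, ← Finset.sum_sub_distrib]
      exact Finset.sum_congr rfl fun r _ => hB r
    rw [h2] at h0
    linarith [h0]
  rw [h1]
  -- expand s and cancel the ghat surface terms
  have h3 : ∑ z : Z, (w z * s z) * (uhat ⬝ᵥ φ z)
      = (∑ z : Z, (φ z ⬝ᵥ uhat) * w z * ∑ r : Fin d, nrm z r *
          ∑ e : Fin d, Cf z e r * (fstar z e - (1 / 2 : ℝ) * a e * (φ z ⬝ᵥ uhat)))
        - (1 / 2 : ℝ) * (∑ z : Z, ∑ r : Fin d,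
            (w z * nrm z r) * ((φ z ⬝ᵥ uhat) * (φ z ⬝ᵥ ghat r))) := by
    rw [Finset.mul_sum, ← Finset.sum_sub_distrib]
    refine Finset.sum_congr rfl fun z _ => ?_
    rw [hs z, dotProduct_comm uhat (φ z)]
    rw [Finset.mul_sum, Finset.mul_sum, Finset.sum_mul, Finset.mul_sum,
      ← Finset.sum_sub_distrib]
    refine Finset.sum_congr rfl fun r _ => ?_
    ring
  have h4 : ∑ r : Fin d, ∑ z : Z, (w z * nrm z r) * ((φ z ⬝ᵥ uhat) * (φ z ⬝ᵥ ghat r))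
      = ∑ z : Z, ∑ r : Fin d, (w z * nrm z r) * ((φ z ⬝ᵥ uhat) * (φ z ⬝ᵥ ghat r)) :=
    Finset.sum_comm
  rw [h3, h4]
  ring
end

section
/- Let d, n_p, n_q be natural numbers. Let χ be a real n_q × n_p matrix and W a diagonal real n_q × n_q matrix such that M₀ := χᵀWχ is invertible, and set Π := M₀⁻¹χᵀW. For each r ∈ {1,…,d} let Ĝ_r be a real n_p × n_p matrix and set D_r := χ·Ĝ_r. Let Z be a finite set and for each z ∈ Z let φ_z ∈ ℝ^{n_p}, w_z ∈ ℝ, n_z ∈ ℝ^d, and Cf_z a real d × d matrix. Assume the summation-by-parts property: for each r, χᵀ W D_r + D_rᵀ W χ = Σ_{z∈Z} w_z (n_z)_r φ_zᵀ φ_z. Assume moreover: (i) there is ê ∈ ℝ^{n_p} with χ·ê = (1,…,1)ᵀ, φ_z·ê = 1 for all z, and Ĝ_r·ê = 0 for all r; (ii) there are vectors ĉ_{e,r} ∈ ℝ^{n_p} such that the volume metric matrices are Cv_{e,r} = diag(χ·ĉ_{e,r}) and the facet metrics satisfy (Cf_z)_{e,r} = φ_z·ĉ_{e,r}; and (iii)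 the discrete geometric conservation law holds: Σ_r Ĝ_r·ĉ_{e,r} = 0 for each e. Let a ∈ ℝ^d and N a real n_p × n_p matrix. Given û ∈ ℝ^{n_p}, set u_z := φ_z·û, ĝ_r := Π·( Σ_e a_e · Cv_{e,r} · (χ·û) ), and t ∈ ℝ^{n_q} with t_q := Σ_{r,e} (Cv_{e,r})_{q,q} · a_e · (D_r·û)_q. Suppose v ∈ ℝ^{n_p} and the numerical-flux values f*_z ∈ ℝ^d satisfy the split-form scheme N·v + (1/2)·Σ_r χᵀ W D_r ĝ_r + (1/2)·χᵀ W t + Σ_z w_z φ_zᵀ s_z = 0, where s_z := Σ_r (n_z)_r · [ Σ_e (Cf_z)_{e,r} · ( f*_{z,e} − (1/2)·a_e·u_z ) − (1/2)·(φ_z·ĝ_r) ]. Then the scheme is locally conservative: êᵀ·N·v = − Σ_z w_z · Σ_r (n_z)_r · Σ_e (Cf_z)_{e,r} · f*_{z,e}. -/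
open Matrix

/-!
Pair the scheme with `ehat`, the modal coefficients of the constant function. Because
`D_r ehat = 0` and `φ_z ⬝ᵥ ehat = 1`, summation by parts turns the volume term `χᵀ W D_r ĝ_r`
into the facet integral of `ĝ_r`. For the metric term `χᵀ W t`, a diagonal `W` lets the metric
factor `χ ĉ_{e,r}` move onto the test side, and summation by parts again leaves a facet integral
plus the volume remainder `Σ_r D_r ĉ_{e,r}`, which the discrete GCL kills. Both facet integrals
cancel exactly against the `-1/2` parts of the surface term `s_z`, leaving only the numerical flux.
-/

theorem sum_sum_sum_rev {M α β γ : Type*} [AddCommMonoid M] [Fintype α] [Fintype β]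
    [Fintype γ] (f : α → β → γ → M) : ∑ x, ∑ y, ∑ z, f x y z = ∑ z, ∑ y, ∑ x, f x y z := by
  rw [Finset.sum_comm_cycle]
  exact Finset.sum_congr rfl fun _ _ => Finset.sum_comm

section SummationByParts

variable {R : Type*} [CommSemiring R] {m n ι ρ σ : Type*}
  [Fintype m] [Fintype n] [Fintype ι] [Fintype ρ] [Fintype σ]

theorem dotProduct_transpose_mul_mulVec (A : Matrix m n R) (W : Matrix m m R) (x : n → R)
    (u : m → R) : x ⬝ᵥ (Aᵀ * W) *ᵥ u = A *ᵥ x ⬝ᵥ W *ᵥ u := by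
  rw [← mulVec_mulVec, dotProduct_mulVec, vecMul_transpose]

theorem Matrix.IsDiag.dotProduct_mulVec {W : Matrix m m R} (hW : W.IsDiag) (u y : m → R) :
    u ⬝ᵥ W *ᵥ y = ∑ q, W q q * (u q * y q) := by
  classical
  rw [← hW.diagonal_diag]
  simp only [dotProduct, mulVec_diagonal, diagonal_apply_eq]
  exact Finset.sum_congr rfl fun q _ => by ring

theorem sbp_dotProduct_add_dotProduct {χ D : Matrix m n R} {W : Matrix m m R} {B : ι → R}
    {φ : ι → n → R} (hSBP : χᵀ * W * D + Dᵀ * W * χ = ∑ z, B z • vecMulVec (φ z) (φ z))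
    (x y : n → R) :
    χ *ᵥ x ⬝ᵥ W *ᵥ D *ᵥ y + D *ᵥ x ⬝ᵥ W *ᵥ χ *ᵥ y = ∑ z, B z * ((φ z ⬝ᵥ x) * (φ z ⬝ᵥ y)) := by
  have h := congrArg (fun M => x ⬝ᵥ M *ᵥ y) hSBP
  simp only [add_mulVec, dotProduct_add, ← mulVec_mulVec y, dotProduct_transpose_mul_mulVec,
    sum_mulVec, dotProduct_sum, smul_mulVec, vecMulVec_mulVec, op_smul_eq_smul, dotProduct_smul,
    smul_eq_mul] at h
  simpa only [dotProduct_comm x, mul_comm (φ _ ⬝ᵥ y)] using h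

theorem sbp_dotProduct_of_mulVec_eq_zero {χ D : Matrix m n R} {W : Matrix m m R} {B : ι → R}
    {φ : ι → n → R} (hSBP : χᵀ * W * D + Dᵀ * W * χ = ∑ z, B z • vecMulVec (φ z) (φ z))
    {e : n → R} (hDe : D *ᵥ e = 0) (hφe : ∀ z, φ z ⬝ᵥ e = 1) (y : n → R) :
    χ *ᵥ e ⬝ᵥ W *ᵥ D *ᵥ y = ∑ z, B z * (φ z ⬝ᵥ y) := by
  simpa [hDe, hφe] using sbp_dotProduct_add_dotProduct hSBP e y

theorem sbp_sum_dotProduct_of_sum_mulVec_eq_zero {χ : Matrix m n R} {D : ρ → Matrix m n R}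
    {W : Matrix m m R} {B : ρ → ι → R} {φ : ι → n → R}
    (hSBP : ∀ r, χᵀ * W * D r + (D r)ᵀ * W * χ = ∑ z, B r z • vecMulVec (φ z) (φ z))
    {c : ρ → n → R} (hc : ∑ r, D r *ᵥ c r = 0) (y : n → R) :
    ∑ r, χ *ᵥ c r ⬝ᵥ W *ᵥ D r *ᵥ y = ∑ r, ∑ z, B r z * ((φ z ⬝ᵥ c r) * (φ z ⬝ᵥ y)) := by
  have h := Finset.sum_congr rfl fun r (_ : r ∈ Finset.univ) =>
    sbp_dotProduct_add_dotProduct (hSBP r) (c r) y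
  rwa [Finset.sum_add_distrib, ← sum_dotProduct, hc, zero_dotProduct, add_zero] at h

theorem sbp_sum_metric_of_sum_mulVec_eq_zero {χ : Matrix m n R} {D : ρ → Matrix m n R}
    {W : Matrix m m R} (hW : W.IsDiag) {B : ρ → ι → R} {φ : ι → n → R}
    (hSBP : ∀ r, χᵀ * W * D r + (D r)ᵀ * W * χ = ∑ z, B r z • vecMulVec (φ z) (φ z))
    {c : σ → ρ → n → R} (hc : ∀ e, ∑ r, D r *ᵥ c e r = 0) (a : σ → R) (y : n → R) :
    ∑ q, W q q * ∑ r, ∑ e, (χ *ᵥ c e r) q * a e * (D r *ᵥ y) q =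
      ∑ e, a e * ∑ r, ∑ z, B r z * ((φ z ⬝ᵥ c e r) * (φ z ⬝ᵥ y)) := by
  simp only [← sbp_sum_dotProduct_of_sum_mulVec_eq_zero hSBP (hc _), hW.dotProduct_mulVec,
    Finset.mul_sum, sum_sum_sum_rev (γ := m)]
  exact Finset.sum_congr rfl fun _ _ => Finset.sum_congr rfl fun _ _ =>
    Finset.sum_congr rfl fun _ _ => by ring

end SummationByParts

theorem split_surface_term {K ρ σ : Type*} [Field K] [Fintype ρ] [Fintype σ] (n : ρ → K)
    (C : σ → ρ → K) (f a : σ → K) (u : K) (g : ρ → K) :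
    ∑ r, n r * ((∑ e, C e r * (f e - 1 / 2 * a e * u)) - 1 / 2 * g r) =
      ∑ r, n r * ∑ e, C e r * f e - 1 / 2 * ∑ r, n r * ∑ e, C e r * (a e * u)
        - 1 / 2 * ∑ r, n r * g r := by
  have hsplit : ∀ r, ∑ e, C e r * (f e - 1 / 2 * a e * u) =
      ∑ e, C e r * f e - 1 / 2 * ∑ e, C e r * (a e * u) := fun r => by
    rw [Finset.mul_sum, ← Finset.sum_sub_distrib]
    exact Finset.sum_congr rfl fun _ _ => by ring
  rw [Finset.mul_sum, Finset.mul_sum, ← Finset.sum_sub_distrib, ← Finset.sum_sub_distrib]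
  exact Finset.sum_congr rfl fun r _ => by rw [hsplit]; ring

theorem fr_split_form_local_conservation_general
    (d n_p n_q : ℕ)
    (χ : Matrix (Fin n_q) (Fin n_p) ℝ)
    (W : Matrix (Fin n_q) (Fin n_q) ℝ) (hWdiag : W.IsDiag)
    (Ghat : Fin d → Matrix (Fin n_p) (Fin n_p) ℝ)
    (Z : Type) [Fintype Z]
    (φ : Z → Fin n_p → ℝ) (w : Z → ℝ) (nrm : Z → Fin d → ℝ)
    (Cf : Z → Matrix (Fin d) (Fin d) ℝ)
    -- summation-by-parts property
    (hSBP : ∀ r : Fin d,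
      χᵀ * W * (χ * Ghat r) + (χ * Ghat r)ᵀ * W * χ =
        ∑ z : Z, (w z * nrm z r) • vecMulVec (φ z) (φ z))
    -- (i) modal coefficients of the constant function 1
    (ehat : Fin n_p → ℝ)
    (hehat1 : χ.mulVec ehat = fun _ => 1)
    (hehat2 : ∀ z : Z, φ z ⬝ᵥ ehat = 1)
    (hehat3 : ∀ r : Fin d, (Ghat r).mulVec ehat = 0)
    -- (ii) metric terms from common modal coefficients
    (Cv : Fin d → Fin d → Matrix (Fin n_q) (Fin n_q) ℝ)
    (chat : Fin d → Fin d → Fin n_p → ℝ)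
    (hCv : ∀ e r, Cv e r = Matrix.diagonal (χ.mulVec (chat e r)))
    (hCf : ∀ (z : Z) (e r : Fin d), Cf z e r = φ z ⬝ᵥ chat e r)
    -- (iii) discrete geometric conservation law
    (hGCL : ∀ e : Fin d, ∑ r : Fin d, (Ghat r).mulVec (chat e r) = 0)
    (a : Fin d → ℝ)
    (N : Matrix (Fin n_p) (Fin n_p) ℝ)
    (uhat : Fin n_p → ℝ)
    (ghat : Fin d → Fin n_p → ℝ)
    (t : Fin n_q → ℝ)
    (ht : ∀ q, t q = ∑ r : Fin d, ∑ e : Fin d,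
      Cv e r q q * a e * (χ * Ghat r).mulVec uhat q)
    (v : Fin n_p → ℝ)
    (fstar : Z → Fin d → ℝ)
    (s : Z → ℝ)
    (hs : ∀ z, s z = ∑ r : Fin d, nrm z r *
      ((∑ e : Fin d, Cf z e r * (fstar z e - (1 / 2 : ℝ) * a e * (φ z ⬝ᵥ uhat)))
        - (1 / 2 : ℝ) * (φ z ⬝ᵥ ghat r)))
    -- the split-form scheme
    (hscheme :
      N.mulVec v
        + (1 / 2 : ℝ) • (∑ r : Fin d, (χᵀ * W).mulVec ((χ * Ghat r).mulVec (ghat r)))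
        + (1 / 2 : ℝ) • (χᵀ * W).mulVec t
        + ∑ z : Z, (w z * s z) • φ z = 0) :
    ehat ⬝ᵥ N.mulVec v =
      - ∑ z : Z, w z * ∑ r : Fin d, nrm z r * ∑ e : Fin d, Cf z e r * fstar z e := by
  have hvolume : ∑ r, ehat ⬝ᵥ (χᵀ * W) *ᵥ (χ * Ghat r) *ᵥ ghat r =
      ∑ z, w z * ∑ r, nrm z r * (φ z ⬝ᵥ ghat r) := by
    have hDe : ∀ r, (χ * Ghat r) *ᵥ ehat = 0 := fun r => by
      rw [← mulVec_mulVec, hehat3, mulVec_zero]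
    simp only [dotProduct_transpose_mul_mulVec,
      sbp_dotProduct_of_mulVec_eq_zero (hSBP _) (hDe _) hehat2, Finset.mul_sum, mul_assoc]
    exact Finset.sum_comm
  have hmetric : ehat ⬝ᵥ (χᵀ * W) *ᵥ t =
      ∑ z, w z * ∑ r, nrm z r * ∑ e, Cf z e r * (a e * (φ z ⬝ᵥ uhat)) := by
    have hDGCL : ∀ e, ∑ r, (χ * Ghat r) *ᵥ chat e r = 0 := fun e => by
      simp_rw [← mulVec_mulVec, ← mulVec_sum, hGCL, mulVec_zero]
    rw [dotProduct_transpose_mul_mulVec, hehat1, hWdiag.dotProduct_mulVec]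
    simp only [one_mul, ht, hCv, diagonal_apply_eq]
    rw [sbp_sum_metric_of_sum_mulVec_eq_zero hWdiag hSBP hDGCL]
    simp only [Finset.mul_sum, hCf, sum_sum_sum_rev (α := Fin d)]
    exact Finset.sum_congr rfl fun _ _ => Finset.sum_congr rfl fun _ _ =>
      Finset.sum_congr rfl fun _ _ => by ring
  have hflux : ∀ z, s z = _ := fun z =>
    (hs z).trans (split_surface_term (nrm z) (Cf z) (fstar z) a (φ z ⬝ᵥ uhat) (φ z ⬝ᵥ ghat ·))
  have H := congrArg (ehat ⬝ᵥ ·) hscheme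
  simp only [dotProduct_add, dotProduct_smul, dotProduct_sum, smul_eq_mul, dotProduct_zero,
    hvolume, hmetric, dotProduct_comm ehat (φ _), hehat2, mul_one, hflux, mul_sub,
    Finset.sum_sub_distrib, mul_left_comm (w _) (1 / 2 : ℝ), ← Finset.mul_sum] at H
  linarith

/-- Local conservation of the proposed provably stable flux reconstruction split form for
linear advection: under the SBP property, the existence of modal coefficients `ehat` of the
constant function 1 annihilated by the derivative operators, interpolation-consistent metric
terms (volume metrics `Cv` and facet metrics `Cf` coming from the same modal coefficients
`chat`), and the discrete geometric conservation law, the rate of change of the conserved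
quantity in the `N = M_m + K_m` norm equals the boundary integral of the numerical flux. -/
theorem fr_split_form_local_conservation
    (d n_p n_q : ℕ)
    (χ : Matrix (Fin n_q) (Fin n_p) ℝ)
    (W : Matrix (Fin n_q) (Fin n_q) ℝ) (hWdiag : W.IsDiag)
    (hM₀ : IsUnit (χᵀ * W * χ))
    (Ghat : Fin d → Matrix (Fin n_p) (Fin n_p) ℝ)
    (Z : Type) [Fintype Z]
    (φ : Z → Fin n_p → ℝ) (w : Z → ℝ) (nrm : Z → Fin d → ℝ)
    (Cf : Z → Matrix (Fin d) (Fin d) ℝ)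
    -- summation-by-parts property
    (hSBP : ∀ r : Fin d,
      χᵀ * W * (χ * Ghat r) + (χ * Ghat r)ᵀ * W * χ =
        ∑ z : Z, (w z * nrm z r) • vecMulVec (φ z) (φ z))
    -- (i) modal coefficients of the constant function 1
    (ehat : Fin n_p → ℝ)
    (hehat1 : χ.mulVec ehat = fun _ => 1)
    (hehat2 : ∀ z : Z, φ z ⬝ᵥ ehat = 1)
    (hehat3 : ∀ r : Fin d, (Ghat r).mulVec ehat = 0)
    -- (ii) metric terms from common modal coefficients
    (Cv : Fin d → Fin d → Matrix (Fin n_q) (Fin n_q) ℝ)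
    (chat : Fin d → Fin d → Fin n_p → ℝ)
    (hCv : ∀ e r, Cv e r = Matrix.diagonal (χ.mulVec (chat e r)))
    (hCf : ∀ (z : Z) (e r : Fin d), Cf z e r = φ z ⬝ᵥ chat e r)
    -- (iii) discrete geometric conservation law
    (hGCL : ∀ e : Fin d, ∑ r : Fin d, (Ghat r).mulVec (chat e r) = 0)
    (a : Fin d → ℝ)
    (N : Matrix (Fin n_p) (Fin n_p) ℝ)
    (uhat : Fin n_p → ℝ)
    (ghat : Fin d → Fin n_p → ℝ)
    (hghat : ∀ r, ghat r =
      ((χᵀ * W * χ)⁻¹ * χᵀ * W).mulVec (∑ e : Fin d, a e • (Cv e r).mulVec (χ.mulVec uhat)))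
    (t : Fin n_q → ℝ)
    (ht : ∀ q, t q = ∑ r : Fin d, ∑ e : Fin d,
      Cv e r q q * a e * (χ * Ghat r).mulVec uhat q)
    (v : Fin n_p → ℝ)
    (fstar : Z → Fin d → ℝ)
    (s : Z → ℝ)
    (hs : ∀ z, s z = ∑ r : Fin d, nrm z r *
      ((∑ e : Fin d, Cf z e r * (fstar z e - (1 / 2 : ℝ) * a e * (φ z ⬝ᵥ uhat)))
        - (1 / 2 : ℝ) * (φ z ⬝ᵥ ghat r)))
    -- the split-form scheme
    (hscheme :
      N.mulVec v
        + (1 / 2 : ℝ) • (∑ r : Fin d, (χᵀ * W).mulVec ((χ * Ghat r).mulVec (ghat r)))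
        + (1 / 2 : ℝ) • (χᵀ * W).mulVec t
        + ∑ z : Z, (w z * s z) • φ z = 0) :
    ehat ⬝ᵥ N.mulVec v =
      - ∑ z : Z, w z * ∑ r : Fin d, nrm z r * ∑ e : Fin d, Cf z e r * fstar z e :=
  fr_split_form_local_conservation_general d n_p n_q χ W hWdiag Ghat Z φ w nrm Cf hSBP ehat hehat1
    hehat2 hehat3 Cv chat hCv hCf hGCL a N uhat ghat t ht v fstar s hs hscheme
end

section
/- Let d, n_p, n_q be natural numbers. Let χ be a real n_q × n_p matrix and W a diagonal real n_q × n_q matrix such that M₀ := χᵀWχ is invertible, and set Π := M₀⁻¹χᵀW. For each r ∈ {1,…,d} let Ĝ_r be a real n_p × n_p matrix and set D_r := χ·Ĝ_r. Let Z be a finite set and for each z ∈ Z let φ_z ∈ ℝ^{n_p}, w_z ∈ ℝ, n_z ∈ ℝ^d, and Cf_z a real d × d matrix. Assume: (i) there is ê ∈ ℝ^{n_p} with χ·ê = (1,…,1)ᵀ and Ĝ_r·ê = 0 for all r; (ii) there are vectors ĉ_{e,r} ∈ ℝ^{n_p} such that the volume metric matrices are Cv_{e,r} = diag(χ·ĉ_{e,r})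 and the facet metrics satisfy (Cf_z)_{e,r} = φ_z·ĉ_{e,r}; and (iii) the discrete geometric conservation law holds: Σ_r Ĝ_r·ĉ_{e,r} = 0 for each e. Let α ∈ ℝ^d be a constant flux and take the numerical flux f*_z = α for every z. Define ĝ_r := Π·( Σ_e α_e · Cv_{e,r} · (1,…,1)ᵀ ), t ∈ ℝ^{n_q} with t_q := Σ_{r,e} (Cv_{e,r})_{q,q} · (D_r·(α_e·ê))_q, and s_z := Σ_r (n_z)_r · [ Σ_e (Cf_z)_{e,r} · ( α_e − (1/2)·α_e ) − (1/2)·(φ_z·ĝ_r) ]. Then the entire split-form right-hand side vanishes: (1/2)·Σ_r χᵀ W D_r ĝ_r + (1/2)·χᵀ W t + Σ_z w_z φ_zᵀ s_z = 0. Consequently, if N is an invertible real n_p × n_p matrix and v satisfies N·v plus this right-hand side equals 0, then v = 0: the scheme preserves a free stream. -/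
open Matrix

private lemma aux_mulVec_sum {m n ι : Type*} [Fintype n] [Fintype ι]
    (A : Matrix m n ℝ) (f : ι → n → ℝ) :
    A.mulVec (∑ i : ι, f i) = ∑ i : ι, A.mulVec (f i) :=
  map_sum A.mulVecLin f Finset.univ

private lemma aux_dot_sum {n ι : Type*} [Fintype n] [Fintype ι]
    (v : n → ℝ) (f : ι → n → ℝ) :
    v ⬝ᵥ (∑ i : ι, f i) = ∑ i : ι, v ⬝ᵥ f i := by
  simp [dotProduct, Finset.mul_sum]
  exact Finset.sum_comm

/-- Free-stream preservation of the proposed provably stable flux reconstruction split form: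
for a constant flux `α` with numerical flux `fstar z = α`, if the metric terms come from
common modal coefficients `chat` (volume metrics `Cv` and facet metrics `Cf` are interpolations
of the same discrete polynomial), the derivative operators annihilate the modal coefficients
`ehat` of the constant function 1, and the discrete geometric conservation law holds, then the
entire split-form right-hand side vanishes; consequently, for any invertible norm matrix `N`,
a time derivative `v` satisfying the scheme must be zero. -/
theorem fr_split_form_free_stream_preservation
    (d n_p n_q : ℕ)
    (χ : Matrix (Fin n_q) (Fin n_p) ℝ)
    (W : Matrix (Fin n_q) (Fin n_q) ℝ) (hWdiag : W.IsDiag)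
    (hM₀ : IsUnit (χᵀ * W * χ))
    (Ghat : Fin d → Matrix (Fin n_p) (Fin n_p) ℝ)
    (Z : Type) [Fintype Z]
    (φ : Z → Fin n_p → ℝ) (w : Z → ℝ) (nrm : Z → Fin d → ℝ)
    (Cf : Z → Matrix (Fin d) (Fin d) ℝ)
    -- (i) modal coefficients of the constant function 1
    (ehat : Fin n_p → ℝ)
    (hehat1 : χ.mulVec ehat = fun _ => 1)
    (hehat2 : ∀ r : Fin d, (Ghat r).mulVec ehat = 0)
    -- (ii) metric terms from common modal coefficients
    (Cv : Fin d → Fin d → Matrix (Fin n_q) (Fin n_q) ℝ)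
    (chat : Fin d → Fin d → Fin n_p → ℝ)
    (hCv : ∀ e r, Cv e r = Matrix.diagonal (χ.mulVec (chat e r)))
    (hCf : ∀ (z : Z) (e r : Fin d), Cf z e r = φ z ⬝ᵥ chat e r)
    -- (iii) discrete geometric conservation law
    (hGCL : ∀ e : Fin d, ∑ r : Fin d, (Ghat r).mulVec (chat e r) = 0)
    -- constant flux and numerical flux
    (α : Fin d → ℝ)
    (fstar : Z → Fin d → ℝ) (hfstar : ∀ z : Z, fstar z = α)
    (ghat : Fin d → Fin n_p → ℝ)
    (hghat : ∀ r, ghat r =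
      ((χᵀ * W * χ)⁻¹ * χᵀ * W).mulVec
        (∑ e : Fin d, α e • (Cv e r).mulVec (fun _ => 1)))
    (t : Fin n_q → ℝ)
    (ht : ∀ q, t q = ∑ r : Fin d, ∑ e : Fin d,
      Cv e r q q * (χ * Ghat r).mulVec (α e • ehat) q)
    (s : Z → ℝ)
    (hs : ∀ z, s z = ∑ r : Fin d, nrm z r *
      ((∑ e : Fin d, Cf z e r * (α e - (1 / 2 : ℝ) * α e))
        - (1 / 2 : ℝ) * (φ z ⬝ᵥ ghat r))) :
    ((1 / 2 : ℝ) • (∑ r : Fin d, (χᵀ * W).mulVec ((χ * Ghat r).mulVec (ghat r)))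
        + (1 / 2 : ℝ) • (χᵀ * W).mulVec t
        + ∑ z : Z, (w z * s z) • φ z = 0) ∧
    (∀ (N : Matrix (Fin n_p) (Fin n_p) ℝ) (v : Fin n_p → ℝ),
      IsUnit N →
      N.mulVec v
        + ((1 / 2 : ℝ) • (∑ r : Fin d, (χᵀ * W).mulVec ((χ * Ghat r).mulVec (ghat r)))
            + (1 / 2 : ℝ) • (χᵀ * W).mulVec t
            + ∑ z : Z, (w z * s z) • φ z) = 0 →
      v = 0) := by
  classical
  have hdet : IsUnit (χᵀ * W * χ).det := (Matrix.isUnit_iff_isUnit_det _).mp hM₀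
  have hinv : (χᵀ * W * χ)⁻¹ * (χᵀ * W * χ) = 1 := Matrix.nonsing_inv_mul _ hdet
  have hghat' : ∀ r, ghat r = ∑ e : Fin d, α e • chat e r := by
    intro r
    have h1 : ∀ e : Fin d, (Cv e r).mulVec (fun _ => 1) = χ.mulVec (chat e r) := by
      intro e
      rw [hCv]
      funext q
      simp [Matrix.mulVec_diagonal]
    have h2 : (∑ e : Fin d, α e • (Cv e r).mulVec (fun _ => 1))
        = χ.mulVec (∑ e : Fin d, α e • chat e r) := by
      rw [aux_mulVec_sum]
      refine Finset.sum_congr rfl fun e _ => ?_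
      rw [h1, Matrix.mulVec_smul]
    rw [hghat, h2, Matrix.mulVec_mulVec]
    have h3 : (χᵀ * W * χ)⁻¹ * χᵀ * W * χ = 1 := by
      rw [Matrix.mul_assoc, Matrix.mul_assoc, ← Matrix.mul_assoc χᵀ W χ, hinv]
    rw [h3, Matrix.one_mulVec]
  have hGg : ∀ r : Fin d, (Ghat r).mulVec (ghat r)
      = ∑ e : Fin d, α e • (Ghat r).mulVec (chat e r) := by
    intro r
    rw [hghat' r, aux_mulVec_sum]
    exact Finset.sum_congr rfl fun e _ => Matrix.mulVec_smul _ _ _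
  have hvol : (∑ r : Fin d, (χᵀ * W).mulVec ((χ * Ghat r).mulVec (ghat r))) = 0 := by
    have hz : (∑ r : Fin d, (χ * Ghat r).mulVec (ghat r)) = 0 := by
      have : ∀ r : Fin d, (χ * Ghat r).mulVec (ghat r)
          = ∑ e : Fin d, α e • χ.mulVec ((Ghat r).mulVec (chat e r)) := by
        intro r
        rw [← Matrix.mulVec_mulVec, hGg r, aux_mulVec_sum]
        exact Finset.sum_congr rfl fun e _ => Matrix.mulVec_smul _ _ _
      simp only [this]
      rw [Finset.sum_comm]
      refine Finset.sum_eq_zero fun e _ => ?_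
      rw [← Finset.smul_sum, ← aux_mulVec_sum, hGCL e, Matrix.mulVec_zero, smul_zero]
    rw [← aux_mulVec_sum, hz, Matrix.mulVec_zero]
  have htz : t = 0 := by
    funext q
    rw [ht q]
    refine Finset.sum_eq_zero fun r _ => Finset.sum_eq_zero fun e _ => ?_
    have hz : (χ * Ghat r).mulVec (α e • ehat) = 0 := by
      rw [Matrix.mulVec_smul, ← Matrix.mulVec_mulVec, hehat2 r, Matrix.mulVec_zero,
        smul_zero]
    rw [hz]
    simp
  have hsz : ∀ z : Z, s z = 0 := by
    intro z
    rw [hs z]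
    refine Finset.sum_eq_zero fun r _ => ?_
    have hdp : φ z ⬝ᵥ ghat r = ∑ e : Fin d, α e * Cf z e r := by
      rw [hghat' r, aux_dot_sum]
      refine Finset.sum_congr rfl fun e _ => ?_
      rw [dotProduct_smul, hCf z e r]
      rfl
    rw [hdp]
    have hb : (∑ e : Fin d, Cf z e r * (α e - (1 / 2 : ℝ) * α e))
        - (1 / 2 : ℝ) * ∑ e : Fin d, α e * Cf z e r = 0 := by
      rw [Finset.mul_sum, ← Finset.sum_sub_distrib]
      refine Finset.sum_eq_zero fun e _ => ?_
      ring
    rw [hb, mul_zero]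
  have hrhs : ((1 / 2 : ℝ) • (∑ r : Fin d, (χᵀ * W).mulVec ((χ * Ghat r).mulVec (ghat r)))
        + (1 / 2 : ℝ) • (χᵀ * W).mulVec t
        + ∑ z : Z, (w z * s z) • φ z) = 0 := by
    have hfz : (∑ z : Z, (w z * s z) • φ z) = 0 :=
      Finset.sum_eq_zero fun z _ => by rw [hsz z, mul_zero, zero_smul]
    rw [hvol, htz, hfz, Matrix.mulVec_zero]; simp
  refine ⟨hrhs, fun N v hN hv => ?_⟩
  rw [hrhs, add_zero] at hv
  have hNdet : IsUnit N.det := (Matrix.isUnit_iff_isUnit_det _).mp hN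
  have hv1 : v = (N⁻¹ * N).mulVec v := by
    rw [Matrix.nonsing_inv_mul _ hNdet, Matrix.one_mulVec]
  rw [hv1, ← Matrix.mulVec_mulVec, hv, Matrix.mulVec_zero]
end
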